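/- Let n ≥ 1 and let α be a real number with α > e^{1/4}. Define F : (0, ∞) → ℝ by F(t) = (log t) · log(α + (log t)^2). Then F is differentiable on (0, ∞), and for every t > 0, writing s = log t, one has 2 t F'(t) + F(t)^2 / n = 2 log(α + s^2) + 4 s^2/(α + s^2) + s^2 (log(α + s^2))^2 / n ≥ 2 log α > 1/2; in particular the infimum over t > 0 of (2 t F'(t) + F(t)^2 / n) is strictly greater than 1/4. -/
import Mathlib


theorem stmt_5 (n : ℕ) (hn : 1 ≤ n) (α : ℝ) (hα : α > Real.exp (1/4))
    (F : ℝ → ℝ) (hF : F = fun t => Real.log t * Real.log (α + Real.log t ^ 2)) :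
    DifferentiableOn ℝ F (Set.Ioi 0) ∧
    (∀ t > (0 : ℝ),
      2 * t * deriv F t + F t ^ 2 / n =
        2 * Real.log (α + Real.log t ^ 2) + 4 * Real.log t ^ 2 / (α + Real.log t ^ 2) +
          Real.log t ^ 2 * Real.log (α + Real.log t ^ 2) ^ 2 / n ∧
      2 * Real.log (α + Real.log t ^ 2) + 4 * Real.log t ^ 2 / (α + Real.log t ^ 2) +
          Real.log t ^ 2 * Real.log (α + Real.log t ^ 2) ^ 2 / n ≥ 2 * Real.log α) ∧
    2 * Real.log α > 1/2 ∧
    sInf {x : ℝ | ∃ t > (0 : ℝ), x = 2 * t * deriv F t + F t ^ 2 / n} > 1/4 := by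
  have hα0 : (0:ℝ) < α := lt_trans (Real.exp_pos _) hα
  have hαlog : Real.log α > 1/4 := by
    have := Real.log_lt_log (Real.exp_pos _) hα
    rwa [Real.log_exp] at this
  have hden : ∀ t : ℝ, (0:ℝ) < α + Real.log t ^ 2 := fun t =>
    lt_of_lt_of_le hα0 (le_add_of_nonneg_right (sq_nonneg _))
  have hn0 : (n:ℝ) ≠ 0 := Nat.cast_ne_zero.mpr (by omega)
  -- derivative
  have hd : ∀ t : ℝ, 0 < t → HasDerivAt F
      (t⁻¹ * Real.log (α + Real.log t ^ 2) +
        Real.log t * (2 * Real.log t ^ 1 * t⁻¹ / (α + Real.log t ^ 2))) t := by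
    intro t ht
    have h1 : HasDerivAt Real.log t⁻¹ t := Real.hasDerivAt_log ht.ne'
    have h2 : HasDerivAt (fun t => α + Real.log t ^ 2) (2 * Real.log t ^ 1 * t⁻¹) t := by
      simpa using (h1.pow 2).const_add α
    have h3 := h2.log (hden t).ne'
    rw [hF]
    exact h1.mul h3
  refine ⟨fun t ht => ((hd t ht).differentiableAt).differentiableWithinAt, ?_, ?_, ?_⟩
  · intro t ht
    have hdv := (hd t ht).deriv
    constructor
    · rw [hdv, hF]
      have h1 : t ≠ 0 := ht.ne'
      have h2 : α + Real.log t ^ 2 ≠ 0 := (hden t).ne'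
      field_simp
      ring
    · have hlog : Real.log α ≤ Real.log (α + Real.log t ^ 2) :=
        Real.log_le_log hα0 (le_add_of_nonneg_right (sq_nonneg _))
      have h4 : 0 ≤ 4 * Real.log t ^ 2 / (α + Real.log t ^ 2) :=
        div_nonneg (by positivity) (hden t).le
      have h5 : 0 ≤ Real.log t ^ 2 * Real.log (α + Real.log t ^ 2) ^ 2 / n := by positivity
      nlinarith
  · linarith
  · have hmem : ∀ x ∈ {x : ℝ | ∃ t > (0 : ℝ), x = 2 * t * deriv F t + F t ^ 2 / n},
        2 * Real.log α ≤ x := by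
      rintro x ⟨t, ht, rfl⟩
      have hdv := (hd t ht).deriv
      have h2 : α + Real.log t ^ 2 ≠ 0 := (hden t).ne'
      have hlog : Real.log α ≤ Real.log (α + Real.log t ^ 2) :=
        Real.log_le_log hα0 (le_add_of_nonneg_right (sq_nonneg _))
      have h4 : 0 ≤ 4 * Real.log t ^ 2 / (α + Real.log t ^ 2) :=
        div_nonneg (by positivity) (hden t).le
      have h5 : 0 ≤ Real.log t ^ 2 * Real.log (α + Real.log t ^ 2) ^ 2 / n := by positivity
      have heq : 2 * t * deriv F t + F t ^ 2 / n =
          2 * Real.log (α + Real.log t ^ 2) + 4 * Real.log t ^ 2 / (α + Real.log t ^ 2) +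
            Real.log t ^ 2 * Real.log (α + Real.log t ^ 2) ^ 2 / n := by
        rw [hdv, hF]
        field_simp
        ring
      rw [heq]
      nlinarith
    have hne : {x : ℝ | ∃ t > (0 : ℝ), x = 2 * t * deriv F t + F t ^ 2 / n}.Nonempty :=
      ⟨_, 1, one_pos, rfl⟩
    have := le_csInf hne hmem
    linarith
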